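/- arXiv:2211.16906 — 4 statements merged into one kernel-verified Lean document; each statement's English description precedes it below -/
import Mathlib

section
/- Dietzmann's Lemma (special case): Let G be a group and x ∈ G an element of finite order. If the conjugacy class X = {g x g⁻¹ | g ∈ G} is finite, then the subgroup generated by X is a finite normal subgroup of G. -/
open scoped commutatorElement

private lemma comm_aux {K : Type*} [Group K] (a b z w : K) (hz : z ∈ Subgroup.center K)
    (hw : w ∈ Subgroup.center K) : ⁅a * z, b * w⁆ = ⁅a, b⁆ := by
  have hz' := Subgroup.mem_center_iff.mp hz
  have hw' := Subgroup.mem_center_iff.mp hw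
  have cz : ∀ g : K, z * g * z⁻¹ = g := fun g => by rw [← hz' g, mul_inv_cancel_right]
  have cw : ∀ g : K, w * g * w⁻¹ = g := fun g => by rw [← hw' g, mul_inv_cancel_right]
  calc ⁅a * z, b * w⁆ = a * (z * (b * w) * z⁻¹) * a⁻¹ * (b * w)⁻¹ := by group
    _ = a * (b * w) * a⁻¹ * (b * w)⁻¹ := by rw [cz]
    _ = a * b * (w * a⁻¹ * w⁻¹) * b⁻¹ := by group
    _ = a * b * a⁻¹ * b⁻¹ := by rw [cw]
    _ = ⁅a, b⁆ := (commutatorElement_def a b).symm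

private lemma finite_commutatorSet_of_center {K : Type*} [Group K]
    [Subgroup.FiniteIndex (Subgroup.center K)] : Finite (commutatorSet K) := by
  have hsub : commutatorSet K ⊆
      (fun p : (K ⧸ Subgroup.center K) × (K ⧸ Subgroup.center K) =>
        ⁅p.1.out, p.2.out⁆) '' Set.univ := by
    rintro _ ⟨a, b, rfl⟩
    refine ⟨(QuotientGroup.mk a, QuotientGroup.mk b), trivial, ?_⟩
    obtain ⟨z, hz⟩ := QuotientGroup.mk_out_eq_mul (Subgroup.center K) a
    obtain ⟨w, hw⟩ := QuotientGroup.mk_out_eq_mul (Subgroup.center K) b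
    show ⁅(QuotientGroup.mk a : K ⧸ Subgroup.center K).out,
        (QuotientGroup.mk b : K ⧸ Subgroup.center K).out⁆ = ⁅a, b⁆
    rw [hz, hw]
    exact comm_aux a b z w z.2 w.2
  exact Set.Finite.to_subtype ((Set.finite_univ.image _).subset hsub)

/-- Dietzmann's Lemma (special case): if `x` has finite order and its conjugacy class is
finite, then the subgroup generated by the conjugacy class of `x` is a finite normal
subgroup of `G`. -/
theorem stmt_1 {G : Type*} [Group G] (x : G) (hx : IsOfFinOrder x)
    (hfin : {y : G | ∃ g : G, g * x * g⁻¹ = y}.Finite) :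
    (Subgroup.closure {y : G | ∃ g : G, g * x * g⁻¹ = y}).Normal ∧
      Finite (Subgroup.closure {y : G | ∃ g : G, g * x * g⁻¹ = y}) := by
  set X : Set G := {y : G | ∃ g : G, g * x * g⁻¹ = y} with hX
  set H : Subgroup G := Subgroup.closure X with hH
  haveI : Finite X := hfin.to_subtype
  -- X is closed under conjugation
  have hconj : ∀ (g : G) (a : G), a ∈ X → g * a * g⁻¹ ∈ X := by
    rintro g a ⟨c, rfl⟩
    exact ⟨g * c, by group⟩
  -- every element of X has finite order
  have hord : ∀ a ∈ X, IsOfFinOrder a := by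
    rintro a ⟨c, rfl⟩
    obtain ⟨n, hn, hxn⟩ := hx.exists_pow_eq_one
    exact isOfFinOrder_iff_pow_eq_one.mpr ⟨n, hn, by
      rw [conj_pow, hxn, mul_one, mul_inv_cancel]⟩
  -- Normality
  have hnormal : H.Normal := by
    constructor
    intro n hn g
    have hmap : Subgroup.map (MulAut.conj g).toMonoidHom H ≤ H := by
      rw [hH, MonoidHom.map_closure]
      apply Subgroup.closure_mono
      rintro _ ⟨a, ha, rfl⟩
      exact hconj g a ha
    exact hmap ⟨n, hn, by simp⟩
  refine ⟨hnormal, ?_⟩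
  -- the centralizer of X has finite index
  let ρ : G →* Equiv.Perm X :=
    { toFun := fun g =>
        { toFun := fun a => ⟨g * a * g⁻¹, hconj g a a.2⟩
          invFun := fun a => ⟨g⁻¹ * a * g⁻¹⁻¹, hconj g⁻¹ a a.2⟩
          left_inv := fun a => by ext; simp [mul_assoc]
          right_inv := fun a => by ext; simp [mul_assoc] }
      map_one' := by ext a; simp
      map_mul' := fun g h => by ext a; simp [mul_assoc] }
  have hker : ρ.ker ≤ Subgroup.centralizer X := by
    intro g hg a ha
    have h1 : ρ g = 1 := hg
    have h2 : g * a * g⁻¹ = a := by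
      have := congrArg (fun e : Equiv.Perm X => ((e ⟨a, ha⟩ : X) : G)) h1
      simpa [ρ] using this
    calc a * g = g * a * g⁻¹ * g := by rw [h2]
      _ = g * a := by group
  haveI : Finite (Equiv.Perm X) := by infer_instance
  haveI : Finite ρ.range := Subtype.finite
  haveI : ρ.ker.FiniteIndex := Subgroup.finiteIndex_ker ρ
  haveI hCfin : (Subgroup.centralizer X).FiniteIndex :=
    Subgroup.finiteIndex_of_le hker
  -- the center of H has finite index in H
  have hcent : (Subgroup.centralizer X).subgroupOf H ≤ Subgroup.center H := by
    rintro ⟨c, hcH⟩ hc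
    rw [Subgroup.mem_subgroupOf] at hc
    rw [Subgroup.mem_center_iff]
    rintro ⟨a, haH⟩
    have haC : a ∈ Subgroup.centralizer {c} := by
      have : H ≤ Subgroup.centralizer {c} := by
        rw [hH]
        apply Subgroup.closure_le _ |>.mpr
        intro b hb
        intro m hm
        rw [Set.mem_singleton_iff] at hm
        subst hm
        exact (hc b hb).symm
      exact this haH
    exact Subtype.ext (by simpa using (haC c rfl).symm)
  haveI : ((Subgroup.centralizer X).subgroupOf H).FiniteIndex :=
    Subgroup.instFiniteIndex_subgroupOf _ _
  haveI : (Subgroup.center H).FiniteIndex := Subgroup.finiteIndex_of_le hcent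
  -- Schur: the commutator subgroup of H is finite
  haveI : Finite (commutatorSet H) := finite_commutatorSet_of_center
  haveI : Finite (_root_.commutator H) := inferInstance
  -- H is finitely generated
  haveI : Group.FG H := Group.closure_finite_fg X
  -- the abelianization of H is finitely generated and torsion, hence finite
  have hsurj : Function.Surjective (Abelianization.of : H →* Abelianization H) := by
    intro q
    exact Quotient.inductionOn' q fun h => ⟨h, rfl⟩
  haveI : Group.FG (Abelianization H) :=
    Group.fg_of_surjective hsurj
  have htor : Monoid.IsTorsion (Abelianization H) := by
    intro q
    obtain ⟨h, rfl⟩ := hsurj q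
    have hmem : h ∈ Subgroup.closure (((↑) : H → G) ⁻¹' X) := by
      rw [Subgroup.closure_closure_coe_preimage]
      trivial
    have hle : Subgroup.closure (((↑) : H → G) ⁻¹' X) ≤
        (CommGroup.torsion (Abelianization H)).comap Abelianization.of := by
      refine (Subgroup.closure_le _).mpr ?_
      intro b hb
      simp only [Set.mem_preimage] at hb
      simp only [SetLike.mem_coe, Subgroup.mem_comap]
      have hb' : IsOfFinOrder b := Submonoid.isOfFinOrder_coe.mp (hord _ hb)
      exact (Abelianization.of : H →* Abelianization H).isOfFinOrder hb'
    exact hle hmem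
  haveI : Finite (Abelianization H) := CommGroup.finite_of_fg_torsion _ htor
  haveI : Finite (H ⧸ _root_.commutator H) := ‹Finite (Abelianization H)›
  exact Finite.of_subgroup_quotient (_root_.commutator H)
end

section
/- Let A ⋊ Q be a semidirect product where A = ℤ^k and Q is finite such that the action of Q on A ⊗ ℚ is an irreducible representation. Then every infinite normal subgroup H of A ⋊ Q satisfies that H ∩ A has finite index in A. -/
/-- Let `G = A ⋊ Q` with `A = ℤ^k` and `Q` finite, such that the action of `Q` on
`A ⊗ ℚ` is irreducible — equivalently, every `Q`-invariant subgroup of `A` is trivial or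
of finite index in `A`.  Then every infinite normal subgroup `H` of `G` meets `A` in a
finite-index subgroup of `A`. -/
theorem stmt_8 (k : ℕ) {Q : Type*} [Group Q] [Finite Q]
    (φ : Q →* MulAut (Multiplicative (Fin k → ℤ)))
    (hirr : ∀ B : Subgroup (Multiplicative (Fin k → ℤ)),
      (∀ q : Q, ∀ a ∈ B, φ q a ∈ B) → B = ⊥ ∨ B.FiniteIndex)
    (H : Subgroup (Multiplicative (Fin k → ℤ) ⋊[φ] Q)) [H.Normal] (hH : Infinite H) :
    ((H ⊓ (SemidirectProduct.inl : Multiplicative (Fin k → ℤ) →*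
        Multiplicative (Fin k → ℤ) ⋊[φ] Q).range).subgroupOf
      (SemidirectProduct.inl : Multiplicative (Fin k → ℤ) →*
        Multiplicative (Fin k → ℤ) ⋊[φ] Q).range).FiniteIndex := by
  set A := Multiplicative (Fin k → ℤ)
  set inl : A →* A ⋊[φ] Q := SemidirectProduct.inl with hinl
  have hNormal : H.Normal := inferInstance
  set B : Subgroup A := (H ⊓ inl.range).comap inl with hB
  have hBinv : ∀ q : Q, ∀ a ∈ B, φ q a ∈ B := by
    intro q a ha
    simp only [hB, Subgroup.mem_comap, Subgroup.mem_inf] at ha ⊢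
    refine ⟨?_, ⟨_, rfl⟩⟩
    rw [hinl, SemidirectProduct.inl_aut, map_inv]
    exact hNormal.conj_mem _ ha.1 _
  -- B ≠ ⊥ since H is infinite
  have hBne : B ≠ ⊥ := by
    intro hbot
    have hinj : Function.Injective
        ((SemidirectProduct.rightHom : A ⋊[φ] Q →* Q).comp H.subtype) := by
      rw [← MonoidHom.ker_eq_bot_iff]
      rw [eq_bot_iff]
      intro x hx
      simp only [MonoidHom.mem_ker, MonoidHom.comp_apply] at hx
      have hxker : (x : A ⋊[φ] Q) ∈ inl.range := by
        rw [hinl, SemidirectProduct.range_inl_eq_ker_rightHom]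
        exact hx
      obtain ⟨a, ha⟩ := hxker
      have : a ∈ B := by
        simp only [hB, Subgroup.mem_comap, Subgroup.mem_inf, ha]
        exact ⟨x.2, ⟨a, ha⟩⟩
      rw [hbot, Subgroup.mem_bot] at this
      subst this
      simp only [map_one] at ha
      exact Subgroup.mem_bot.mpr (Subtype.ext ha.symm)
    haveI : Finite H := Finite.of_injective _ hinj
    exact not_finite H
  have hBfi : B.FiniteIndex := (hirr B hBinv).resolve_left hBne
  -- transfer finite index across the isomorphism A ≃ inl.range
  have hinj : Function.Injective inl := SemidirectProduct.inl_injective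
  have hsurj : Function.Surjective inl.rangeRestrict := inl.rangeRestrict_surjective
  have hcomap : ((H ⊓ inl.range).subgroupOf inl.range).comap inl.rangeRestrict = B := by
    ext a
    simp [Subgroup.mem_subgroupOf, hB, Subgroup.mem_comap]
  have hidx : ((H ⊓ inl.range).subgroupOf inl.range).index = B.index := by
    rw [← hcomap]
    exact (Subgroup.index_comap_of_surjective _ hsurj).symm
  exact ⟨by rw [hidx]; exact hBfi.index_ne_zero⟩
end

section
/- Let W = W_gen × W_aff × W_sph be a Coxeter group decomposed into its generic, affine, and spherical parts, and let H be a normal subgroup of W. Then H is finite if and only if H ⊆ W_sph, assuming (i) irreducible generic components have no non-trivial narrow normal subgroups and (ii) irreducible affine components have no non-trivial finite normal subgroups. -/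
/-- A group is *narrow* if it contains no copy of the free group of rank 2. -/
def IsNarrow (G : Type*) [Group G] : Prop :=
  ∀ f : FreeGroup (Fin 2) →* G, ¬ Function.Injective f

lemma isNarrow_of_finite (G : Type*) [Group G] [Finite G] : IsNarrow G := by
  intro f hf
  have h1 : Finite (FreeGroup (Fin 2)) := Finite.of_injective f hf
  have h2 : Infinite (FreeGroup (Fin 2)) := inferInstance
  exact not_finite (FreeGroup (Fin 2))

lemma map_finite {G H : Type*} [Group G] [Group H] (f : G →* H) (K : Subgroup G)
    [Finite K] : Finite (K.map f) := by
  have : (K : Set G).Finite := Set.toFinite _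
  have : (f '' (K : Set G)).Finite := this.image f
  exact this

/-- Let `W = W_gen × W_aff × W_sph` where: every non-trivial narrow normal subgroup of
`W_gen` is trivial (as holds for products of generic irreducible Coxeter groups), every
finite normal subgroup of `W_aff` is trivial (as holds for products of irreducible affine
Coxeter groups), and `W_sph` is finite.  Then a normal subgroup `H` of `W` is finite if
and only if it is contained in the spherical factor `1 × 1 × W_sph`. -/
theorem stmt_10 {Wgen Waff Wsph : Type*} [Group Wgen] [Group Waff] [Group Wsph]
    [Finite Wsph]
    (hgen : ∀ K : Subgroup Wgen, K.Normal → IsNarrow K → K = ⊥)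
    (haff : ∀ K : Subgroup Waff, K.Normal → Finite K → K = ⊥)
    (H : Subgroup (Wgen × Waff × Wsph)) [H.Normal] :
    Finite H ↔ H ≤ (⊥ : Subgroup Wgen).prod ((⊥ : Subgroup Waff).prod ⊤) := by
  constructor
  · intro hfin
    -- projection to Wgen
    set pg : Wgen × Waff × Wsph →* Wgen := MonoidHom.fst _ _ with hpg
    set pa : Wgen × Waff × Wsph →* Waff :=
      (MonoidHom.fst Waff Wsph).comp (MonoidHom.snd Wgen (Waff × Wsph)) with hpa
    have hpgs : Function.Surjective pg := fun x => ⟨(x, 1, 1), rfl⟩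
    have hpas : Function.Surjective pa := fun x => ⟨(1, x, 1), rfl⟩
    have hKg : H.map pg = ⊥ := by
      apply hgen _ (Subgroup.Normal.map ‹H.Normal› pg hpgs)
      have : Finite (H.map pg) := map_finite pg H
      exact isNarrow_of_finite _
    have hKa : H.map pa = ⊥ := by
      apply haff _ (Subgroup.Normal.map ‹H.Normal› pa hpas)
      exact map_finite pa H
    intro x hx
    have hxg : x.1 ∈ H.map pg := ⟨x, hx, rfl⟩
    have hxa : x.2.1 ∈ H.map pa := ⟨x, hx, rfl⟩
    rw [hKg, Subgroup.mem_bot] at hxg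
    rw [hKa, Subgroup.mem_bot] at hxa
    refine Subgroup.mem_prod.mpr ⟨hxg, Subgroup.mem_prod.mpr ⟨hxa, trivial⟩⟩
  · intro hle
    have : Finite ((⊥ : Subgroup Wgen).prod ((⊥ : Subgroup Waff).prod (⊤ : Subgroup Wsph))) := by
      have e := Subgroup.prodEquiv (⊥ : Subgroup Wgen) ((⊥ : Subgroup Waff).prod (⊤ : Subgroup Wsph))
      have e2 := Subgroup.prodEquiv (⊥ : Subgroup Waff) (⊤ : Subgroup Wsph)
      have : Finite ((⊥ : Subgroup Waff).prod (⊤ : Subgroup Wsph)) := Finite.of_equiv _ e2.symm.toEquiv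
      exact Finite.of_equiv _ e.symm.toEquiv
    exact Finite.of_injective _ (Subgroup.inclusion_injective hle)
end

section
/- Let G = G₁ × ⋯ × G_p be a direct product and suppose h ∈ Aut(G) satisfies h(G_i) = G_j with i ≠ j. If K ⊴ Aut(G) contains h and K ∩ (Aut(G₁) × ⋯ × Aut(G_p)) = {1}, then for every w ∈ G_i with γ_w ≠ 1 one gets γ_{h(w)} = γ_w, which is impossible when the G_k are centerless and w ≠ 1; hence no such h exists, i.e. K = {1}. -/
/-- The `i`-th factor `G i` viewed as a subgroup of the direct product `∀ k, G k`. -/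
def factorSubgroup {ι : Type*} (G : ι → Type*) [∀ k, Group (G k)] (i : ι) :
    Subgroup (∀ k, G k) where
  carrier := {x | ∀ l, l ≠ i → x l = 1}
  one_mem' := fun _ _ => rfl
  mul_mem' := by
    intro a b ha hb l hl
    simp [Pi.mul_apply, ha l hl, hb l hl]
  inv_mem' := by
    intro a ha l hl
    simp [Pi.inv_apply, ha l hl]

lemma mem_factorSubgroup_iff {ι : Type*} (G : ι → Type*) [∀ k, Group (G k)] (i : ι)
    (x : ∀ k, G k) : x ∈ factorSubgroup G i ↔ ∀ l, l ≠ i → x l = 1 := Iff.rfl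

/-- Inner automorphisms preserve every factor subgroup. -/
lemma conj_map_factor {ι : Type*} (G : ι → Type*) [∀ k, Group (G k)] (u : ∀ k, G k) (k : ι) :
    Subgroup.map (MulAut.conj u).toMonoidHom (factorSubgroup G k) = factorSubgroup G k := by
  ext y
  constructor
  · rintro ⟨x, hx, rfl⟩ l hl
    simp [MulAut.conj_apply, hx l hl]
  · intro hy
    refine ⟨u⁻¹ * y * u, fun l hl => by simp [hy l hl], ?_⟩
    simp [MulAut.conj_apply]
    group

/-- Let `G = G₁ × ⋯ × G_p` be a product of centerless groups, `G i` non-trivial, and let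
`K` be a normal subgroup of `Aut(G)` meeting the subgroup of factor-preserving
automorphisms (`Aut(G₁) × ⋯ × Aut(G_p)`) trivially.  Then no element `h ∈ K` can map the
factor `G i` onto a different factor `G j`: such an `h` would give `γ_{h(w)} = γ_w` for
all `w ∈ G_i`, which is impossible for `w ≠ 1`. -/
theorem stmt_17 {ι : Type*} (G : ι → Type*) [∀ k, Group (G k)]
    (hcenterless : ∀ k, Subgroup.center (G k) = ⊥)
    (K : Subgroup (MulAut (∀ k, G k))) [K.Normal]
    (hKdisj : ∀ f ∈ K,
      (∀ k, Subgroup.map f.toMonoidHom (factorSubgroup G k) = factorSubgroup G k) → f = 1)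
    (i j : ι) (hij : i ≠ j) [Nontrivial (G i)]
    (h : MulAut (∀ k, G k)) (hhK : h ∈ K)
    (hmap : Subgroup.map h.toMonoidHom (factorSubgroup G i) = factorSubgroup G j) :
    False := by
  classical
  obtain ⟨x, hx⟩ := exists_ne (1 : G i)
  set w : ∀ k, G k := Pi.mulSingle i x with hw
  have hwmem : w ∈ factorSubgroup G i := by
    intro l hl
    simp [hw, Pi.mulSingle_eq_of_ne hl]
  set c : MulAut (∀ k, G k) := MulAut.conj w with hc
  -- f is in K by normality
  have hf1 : c * h * c⁻¹ ∈ K := Subgroup.Normal.conj_mem ‹K.Normal› h hhK c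
  have hfK : c * h * c⁻¹ * h⁻¹ ∈ K := K.mul_mem hf1 (K.inv_mem hhK)
  -- f is the inner automorphism by w * (h w)⁻¹
  have hfeq : c * h * c⁻¹ * h⁻¹ = MulAut.conj (w * (h w)⁻¹) := by
    ext g
    simp only [MulAut.mul_apply, MulAut.conj_apply, hc]
    simp only [MulAut.conj_apply, MulAut.conj_symm_apply, map_mul, map_inv,
      MulEquiv.apply_symm_apply, MulAut.inv_def, mul_inv_rev, inv_inv, mul_assoc]
  have hftriv : c * h * c⁻¹ * h⁻¹ = 1 := by
    apply hKdisj _ hfK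
    intro k
    rw [hfeq]
    exact conj_map_factor G _ k
  -- so c and h commute
  have hcomm : ∀ g : ∀ k, G k, w * h g * w⁻¹ = h w * h g * (h w)⁻¹ := by
    intro g
    have : (c * h) g = (h * c) g := by
      have : c * h = h * c := by
        have := mul_eq_one_iff_eq_inv.mp hftriv
        calc c * h = (c * h * c⁻¹ * h⁻¹) * (h * c) := by group
          _ = h * c := by rw [hftriv]; group
      rw [this]
    simpa [MulAut.mul_apply, MulAut.conj_apply, map_mul, map_inv, hc] using this
  -- h w lies in the j-th factor, so its i-th component is 1
  have hhw : h w ∈ factorSubgroup G j := by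
    rw [← hmap]
    exact ⟨w, hwmem, rfl⟩
  have hhwi : (h w) i = 1 := hhw i hij
  -- x is central in G i
  have hxc : x ∈ Subgroup.center (G i) := by
    rw [Subgroup.mem_center_iff]
    intro b
    have := congrFun (hcomm (h.symm (Pi.mulSingle i b))) i
    simp only [Pi.mul_apply, Pi.inv_apply, MulEquiv.apply_symm_apply, hhwi,
      Pi.mulSingle_eq_same, hw] at this
    simp only [← hw, hhwi, one_mul, inv_one, mul_one] at this
    -- this : x * b * x⁻¹ = b
    exact (mul_inv_eq_iff_eq_mul.mp this).symm
  rw [hcenterless i, Subgroup.mem_bot] at hxc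
  exact hx hxc
end
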